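/- arXiv:2605.13437 — 7 statements merged into one kernel-verified Lean document; each statement's English description precedes it below -/
import Mathlib

section
/- Let M = UΣVᵀ where U ∈ ℝ^{m×r} and V ∈ ℝ^{n×r} have orthonormal columns and Σ ∈ ℝ^{r×r} is an invertible diagonal matrix, and let S ∈ ℝ^{m×s}, P ∈ ℝ^{n×c} be selection matrices with rank(SᵀU) = r and rank(VᵀP) = r. Then the intersection matrix W = SᵀMP has rank r. -/
open Matrix

/-- `S` is a selection matrix: its columns are distinct standard basis vectors. -/
def IsSelection {m s : ℕ} (S : Matrix (Fin m) (Fin s) ℝ) : Prop :=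
  ∃ f : Fin s → Fin m, Function.Injective f ∧ ∀ i j, S i j = if i = f j then 1 else 0

lemma rank_mul_eq_right_of_full_col_rank {s r c : ℕ}
    (A : Matrix (Fin s) (Fin r) ℝ) (B : Matrix (Fin r) (Fin c) ℝ)
    (hA : A.rank = r) : (A * B).rank = B.rank := by
  have hinj : Function.Injective A.mulVecLin := by
    rw [← LinearMap.ker_eq_bot, ← Submodule.finrank_eq_zero]
    have h := A.mulVecLin.finrank_range_add_finrank_ker
    rw [Module.finrank_pi] at h
    simp only [Fintype.card_fin] at h
    have : A.rank = Module.finrank ℝ (LinearMap.range A.mulVecLin) := rfl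
    omega
  rw [Matrix.rank, Matrix.rank, mulVecLin_mul, LinearMap.range_comp]
  exact (LinearEquiv.finrank_eq
    (Submodule.equivMapOfInjective A.mulVecLin hinj (LinearMap.range B.mulVecLin))).symm

theorem intersection_matrix_has_rank_r {m n r s c : ℕ}
    (U : Matrix (Fin m) (Fin r) ℝ) (V : Matrix (Fin n) (Fin r) ℝ)
    (Sig : Matrix (Fin r) (Fin r) ℝ) (M : Matrix (Fin m) (Fin n) ℝ)
    (S : Matrix (Fin m) (Fin s) ℝ) (P : Matrix (Fin n) (Fin c) ℝ)
    (hU : Uᵀ * U = 1) (hV : Vᵀ * V = 1)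
    (hSigDiag : Sig.IsDiag) (hSigInv : IsUnit Sig.det)
    (hM : M = U * Sig * Vᵀ)
    (hS : IsSelection S) (hP : IsSelection P)
    (hSU : (Sᵀ * U).rank = r) (hVP : (Vᵀ * P).rank = r) :
    (Sᵀ * M * P).rank = r := by
  have key : Sᵀ * M * P = (Sᵀ * U) * (Sig * (Vᵀ * P)) := by
    rw [hM]; simp only [Matrix.mul_assoc]
  rw [key, rank_mul_eq_right_of_full_col_rank _ _ hSU,
    rank_mul_eq_right_of_isUnit_det Sig _ hSigInv, hVP]
end

section
/- Let M = UΣVᵀ be a rank-r matrix with compact SVD, and let (S,P) be an admissible sampling pair (rank(SᵀU) = r, rank(VᵀP) = r). Then MP(SᵀMP)† SᵀM = M, i.e., the CUR approximation built from the selected rows and columns recovers M exactly. -/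
open Matrix

/-- `B` is the Moore–Penrose pseudoinverse of `A` (the four Penrose conditions;
such a matrix is unique when it exists). -/
def IsMP {m n : ℕ} (A : Matrix (Fin m) (Fin n) ℝ) (B : Matrix (Fin n) (Fin m) ℝ) : Prop :=
  A * B * A = A ∧ B * A * B = B ∧ (A * B)ᵀ = A * B ∧ (B * A)ᵀ = B * A

lemma aux_isUnit_of_rank {r : ℕ} (C : Matrix (Fin r) (Fin r) ℝ) (h : C.rank = r) :
    IsUnit C.det := by
  rw [← Matrix.isUnit_iff_isUnit_det, ← Matrix.mulVec_surjective_iff_isUnit]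
  have htop : LinearMap.range C.mulVecLin = ⊤ := by
    apply Submodule.eq_top_of_finrank_eq
    simp only [Matrix.rank] at h
    simp [h]
  intro v
  obtain ⟨w, hw⟩ := LinearMap.range_eq_top.mp htop v
  exact ⟨w, hw⟩

lemma aux_left_cancel {s r n : ℕ} (A : Matrix (Fin s) (Fin r) ℝ)
    (hAA : IsUnit (Aᵀ * A).det)
    {X Y : Matrix (Fin r) (Fin n) ℝ} (h : A * X = A * Y) : X = Y := by
  have h2 : Aᵀ * A * X = Aᵀ * A * Y := by
    rw [Matrix.mul_assoc, Matrix.mul_assoc, h]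
  calc X = (Aᵀ * A)⁻¹ * (Aᵀ * A) * X := by
            rw [Matrix.nonsing_inv_mul _ hAA, Matrix.one_mul]
    _ = (Aᵀ * A)⁻¹ * (Aᵀ * A) * Y := by
            rw [Matrix.mul_assoc, h2, ← Matrix.mul_assoc]
    _ = Y := by rw [Matrix.nonsing_inv_mul _ hAA, Matrix.one_mul]

lemma aux_right_cancel {r c n : ℕ} (B : Matrix (Fin r) (Fin c) ℝ)
    (hBB : IsUnit (B * Bᵀ).det)
    {X Y : Matrix (Fin n) (Fin r) ℝ} (h : X * B = Y * B) : X = Y := by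
  have h2 : X * (B * Bᵀ) = Y * (B * Bᵀ) := by
    rw [← Matrix.mul_assoc, ← Matrix.mul_assoc, h]
  calc X = X * ((B * Bᵀ) * (B * Bᵀ)⁻¹) := by
            rw [Matrix.mul_nonsing_inv _ hBB, Matrix.mul_one]
    _ = Y * ((B * Bᵀ) * (B * Bᵀ)⁻¹) := by
            rw [← Matrix.mul_assoc, h2, Matrix.mul_assoc]
    _ = Y := by rw [Matrix.mul_nonsing_inv _ hBB, Matrix.mul_one]

/-- Exactness of CUR under admissible sampling: `M P (Sᵀ M P)† Sᵀ M = M`. -/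
theorem cur_exactness {m n r s c : ℕ}
    (U : Matrix (Fin m) (Fin r) ℝ) (V : Matrix (Fin n) (Fin r) ℝ)
    (Sig : Matrix (Fin r) (Fin r) ℝ) (M : Matrix (Fin m) (Fin n) ℝ)
    (S : Matrix (Fin m) (Fin s) ℝ) (P : Matrix (Fin n) (Fin c) ℝ)
    (Wd : Matrix (Fin c) (Fin s) ℝ)
    (hU : Uᵀ * U = 1) (hV : Vᵀ * V = 1)
    (hSigDiag : Sig.IsDiag) (hSigInv : IsUnit Sig.det)
    (hM : M = U * Sig * Vᵀ)
    (hSU : (Sᵀ * U).rank = r) (hVP : (Vᵀ * P).rank = r)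
    (hWd : IsMP (Sᵀ * M * P) Wd) :
    M * P * Wd * (Sᵀ * M) = M := by
  set A := Sᵀ * U with hA
  set B := Vᵀ * P with hB
  have hAA : IsUnit (Aᵀ * A).det := by
    apply aux_isUnit_of_rank
    rw [Matrix.rank_transpose_mul_self]
    exact hSU
  have hBB : IsUnit (B * Bᵀ).det := by
    apply aux_isUnit_of_rank
    rw [Matrix.rank_self_mul_transpose]
    exact hVP
  have hSMP : Sᵀ * M * P = A * (Sig * B) := by
    rw [hM, hA, hB]
    simp only [Matrix.mul_assoc]
  have hP1 := hWd.1
  rw [hSMP] at hP1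
  -- hP1 : A * (Sig * B) * Wd * (A * (Sig * B)) = A * (Sig * B)
  have key : Sig * B * Wd * A * Sig = Sig := by
    have h1 : A * (Sig * B * Wd * A * Sig * B) = A * (Sig * B) := by
      calc A * (Sig * B * Wd * A * Sig * B)
          = A * (Sig * B) * Wd * (A * (Sig * B)) := by
            simp only [Matrix.mul_assoc]
        _ = A * (Sig * B) := hP1
    have h2 : Sig * B * Wd * A * Sig * B = Sig * B :=
      aux_left_cancel A hAA h1
    exact aux_right_cancel B hBB h2
  calc M * P * Wd * (Sᵀ * M)
      = U * (Sig * B * Wd * A * Sig) * Vᵀ := by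
        rw [hM, hA, hB]; simp only [Matrix.mul_assoc]
    _ = U * Sig * Vᵀ := by rw [key, Matrix.mul_assoc]
    _ = M := hM.symm
end

section
/- Let M = UΣVᵀ with compact SVD and (S,P) admissible; set W = SᵀMP. Then MP W† Sᵀ = U(SᵀU)†Sᵀ = Π_U and P W† SᵀM = P(VᵀP)†Vᵀ = Π_V. -/
open Matrix

lemma isUnit_of_rank_eq_card {r : ℕ} (X : Matrix (Fin r) (Fin r) ℝ) (h : X.rank = r) :
    IsUnit X := by
  rw [← Matrix.mulVec_surjective_iff_isUnit]
  rw [Matrix.rank] at h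
  have htop : LinearMap.range X.mulVecLin = ⊤ := by
    apply Submodule.eq_top_of_finrank_eq
    simp [h]
  intro v
  exact LinearMap.range_eq_top.mp htop v

lemma eq_one_of_isUnit_idem {r : ℕ} (X : Matrix (Fin r) (Fin r) ℝ) (hu : IsUnit X)
    (hidem : X * X = X) : X = 1 := by
  have hdet : IsUnit X.det := (Matrix.isUnit_iff_isUnit_det X).mp hu
  have h1 : X⁻¹ * (X * X) = X⁻¹ * X := by rw [hidem]
  rwa [← Matrix.mul_assoc, Matrix.nonsing_inv_mul X hdet, Matrix.one_mul] at h1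

/-- Full column rank: a `{1}`-inverse is a left inverse. -/
lemma left_inv_of_full_rank {s r : ℕ} (A : Matrix (Fin s) (Fin r) ℝ)
    (B : Matrix (Fin r) (Fin s) ℝ) (hABA : A * B * A = A) (hr : A.rank = r) :
    B * A = 1 := by
  have hle : A.rank ≤ (B * A).rank := by
    conv_lhs => rw [← hABA, Matrix.mul_assoc]
    exact Matrix.rank_mul_le_right A (B * A)
  rw [hr] at hle
  have hrk : (B * A).rank = r :=
    le_antisymm ((B * A).rank_le_card_width.trans (by simp)) hle
  have hidem : (B * A) * (B * A) = B * A := by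
    rw [Matrix.mul_assoc, ← Matrix.mul_assoc A B A, hABA]
  exact eq_one_of_isUnit_idem _ (isUnit_of_rank_eq_card _ hrk) hidem

/-- Full row rank: a `{1}`-inverse is a right inverse. -/
lemma right_inv_of_full_rank {r c : ℕ} (A : Matrix (Fin r) (Fin c) ℝ)
    (B : Matrix (Fin c) (Fin r) ℝ) (hABA : A * B * A = A) (hr : A.rank = r) :
    A * B = 1 := by
  have hle : A.rank ≤ (A * B).rank := by
    conv_lhs => rw [← hABA]
    exact Matrix.rank_mul_le_left (A * B) A
  rw [hr] at hle
  have hrk : (A * B).rank = r :=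
    le_antisymm ((A * B).rank_le_card_width.trans (by simp)) hle
  have hidem : (A * B) * (A * B) = A * B := by
    rw [← Matrix.mul_assoc, hABA]
  exact eq_one_of_isUnit_idem _ (isUnit_of_rank_eq_card _ hrk) hidem

/-- The Moore–Penrose pseudoinverse is unique. -/
lemma isMP_unique {m n : ℕ} {A : Matrix (Fin m) (Fin n) ℝ} {B C : Matrix (Fin n) (Fin m) ℝ}
    (hB : IsMP A B) (hC : IsMP A C) : B = C := by
  obtain ⟨hB1, hB2, hB3, hB4⟩ := hB
  obtain ⟨hC1, hC2, hC3, hC4⟩ := hC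
  have hAt1 : Aᵀ = Aᵀ * A * C := by
    conv_lhs => rw [← hC1]
    rw [Matrix.transpose_mul, hC3, ← Matrix.mul_assoc]
  have hAB_AC : A * B = A * C := by
    calc A * B = Bᵀ * Aᵀ := by rw [← Matrix.transpose_mul, hB3]
    _ = Bᵀ * (Aᵀ * A * C) := by rw [← hAt1]
    _ = (Bᵀ * Aᵀ) * A * C := by simp only [Matrix.mul_assoc]
    _ = (A * B) * A * C := by rw [← Matrix.transpose_mul, hB3]
    _ = A * C := by rw [hB1]
  have hAt2 : Aᵀ = C * A * Aᵀ := by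
    conv_lhs => rw [← hC1, Matrix.mul_assoc]
    rw [Matrix.transpose_mul, hC4]
  have hBA_CA : B * A = C * A := by
    calc B * A = Aᵀ * Bᵀ := by rw [← Matrix.transpose_mul, hB4]
    _ = (C * A * Aᵀ) * Bᵀ := by rw [← hAt2]
    _ = C * A * (Aᵀ * Bᵀ) := by simp only [Matrix.mul_assoc]
    _ = C * A * (B * A) := by rw [← Matrix.transpose_mul, hB4]
    _ = C * (A * B * A) := by simp only [Matrix.mul_assoc]
    _ = C * A := by rw [hB1]
  calc B = B * A * B := hB2.symm
  _ = B * (A * C) := by rw [Matrix.mul_assoc, hAB_AC]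
  _ = (B * A) * C := by rw [Matrix.mul_assoc]
  _ = (C * A) * C := by rw [hBA_CA]
  _ = C := hC2

/-- The candidate `Vd * Sg⁻¹ * Ud` is a Moore–Penrose inverse of `A * Sg * Bm`. -/
lemma key_isMP {r s c : ℕ} (A : Matrix (Fin s) (Fin r) ℝ) (Bm : Matrix (Fin r) (Fin c) ℝ)
    (Sg : Matrix (Fin r) (Fin r) ℝ) (Ud : Matrix (Fin r) (Fin s) ℝ)
    (Vd : Matrix (Fin c) (Fin r) ℝ)
    (hUdA : Ud * A = 1) (hBmVd : Bm * Vd = 1)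
    (hSig1 : Sg * Sg⁻¹ = 1) (hSig2 : Sg⁻¹ * Sg = 1)
    (hUd3 : (A * Ud)ᵀ = A * Ud) (hVd4 : (Vd * Bm)ᵀ = Vd * Bm) :
    IsMP (A * Sg * Bm) (Vd * Sg⁻¹ * Ud) := by
  have hWB : (A * Sg * Bm) * (Vd * Sg⁻¹ * Ud) = A * Ud := by
    calc (A * Sg * Bm) * (Vd * Sg⁻¹ * Ud)
        = A * (Sg * ((Bm * Vd) * (Sg⁻¹ * Ud))) := by simp only [Matrix.mul_assoc]
    _ = A * ((Sg * Sg⁻¹) * Ud) := by rw [hBmVd, Matrix.one_mul, Matrix.mul_assoc]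
    _ = A * Ud := by rw [hSig1, Matrix.one_mul]
  have hBW : (Vd * Sg⁻¹ * Ud) * (A * Sg * Bm) = Vd * Bm := by
    calc (Vd * Sg⁻¹ * Ud) * (A * Sg * Bm)
        = Vd * (Sg⁻¹ * ((Ud * A) * (Sg * Bm))) := by simp only [Matrix.mul_assoc]
    _ = Vd * ((Sg⁻¹ * Sg) * Bm) := by rw [hUdA, Matrix.one_mul, Matrix.mul_assoc]
    _ = Vd * Bm := by rw [hSig2, Matrix.one_mul]
  refine ⟨?_, ?_, ?_, ?_⟩
  · rw [hWB]
    calc A * Ud * (A * Sg * Bm) = A * ((Ud * A) * (Sg * Bm)) := by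
          simp only [Matrix.mul_assoc]
    _ = A * (Sg * Bm) := by rw [hUdA, Matrix.one_mul]
    _ = A * Sg * Bm := by rw [Matrix.mul_assoc]
  · rw [hBW]
    calc Vd * Bm * (Vd * Sg⁻¹ * Ud) = Vd * ((Bm * Vd) * (Sg⁻¹ * Ud)) := by
          simp only [Matrix.mul_assoc]
    _ = Vd * (Sg⁻¹ * Ud) := by rw [hBmVd, Matrix.one_mul]
    _ = Vd * Sg⁻¹ * Ud := by rw [Matrix.mul_assoc]
  · rw [hWB]; exact hUd3
  · rw [hBW]; exact hVd4

/-- With `W = Sᵀ M P` under admissible sampling,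
`M P W† Sᵀ = U (SᵀU)† Sᵀ = Π_U` and `P W† Sᵀ M = P (VᵀP)† Vᵀ = Π_V`. -/
theorem cur_factors_are_oblique_projectors {m n r s c : ℕ}
    (U : Matrix (Fin m) (Fin r) ℝ) (V : Matrix (Fin n) (Fin r) ℝ)
    (Sig : Matrix (Fin r) (Fin r) ℝ) (M : Matrix (Fin m) (Fin n) ℝ)
    (S : Matrix (Fin m) (Fin s) ℝ) (P : Matrix (Fin n) (Fin c) ℝ)
    (hU : Uᵀ * U = 1) (hV : Vᵀ * V = 1)
    (hSigDiag : Sig.IsDiag) (hSigInv : IsUnit Sig.det)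
    (hM : M = U * Sig * Vᵀ)
    (hSU : (Sᵀ * U).rank = r) (hVP : (Vᵀ * P).rank = r)
    (Wd : Matrix (Fin c) (Fin s) ℝ) (hWd : IsMP (Sᵀ * M * P) Wd)
    (Ud : Matrix (Fin r) (Fin s) ℝ) (hUd : IsMP (Sᵀ * U) Ud)
    (Vd : Matrix (Fin c) (Fin r) ℝ) (hVd : IsMP (Vᵀ * P) Vd) :
    M * P * Wd * Sᵀ = U * Ud * Sᵀ ∧ P * Wd * (Sᵀ * M) = P * Vd * Vᵀ := by
  obtain ⟨hUd1, hUd2, hUd3, hUd4⟩ := hUd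
  obtain ⟨hVd1, hVd2, hVd3, hVd4⟩ := hVd
  have hUdA : Ud * (Sᵀ * U) = 1 := left_inv_of_full_rank _ _ hUd1 hSU
  have hPVd : (Vᵀ * P) * Vd = 1 := right_inv_of_full_rank _ _ hVd1 hVP
  have hSig1 : Sig * Sig⁻¹ = 1 := Matrix.mul_nonsing_inv Sig hSigInv
  have hSig2 : Sig⁻¹ * Sig = 1 := Matrix.nonsing_inv_mul Sig hSigInv
  have hW : Sᵀ * M * P = (Sᵀ * U) * Sig * (Vᵀ * P) := by
    rw [hM]; simp only [Matrix.mul_assoc]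
  have hBMP : IsMP (Sᵀ * M * P) (Vd * Sig⁻¹ * Ud) := by
    rw [hW]
    exact key_isMP _ _ _ _ _ hUdA hPVd hSig1 hSig2 hUd3 hVd4
  have hWdB : Wd = Vd * Sig⁻¹ * Ud := isMP_unique hWd hBMP
  constructor
  · calc M * P * Wd * Sᵀ
        = U * (Sig * (((Vᵀ * P) * Vd) * (Sig⁻¹ * (Ud * Sᵀ)))) := by
          rw [hWdB, hM]; simp only [Matrix.mul_assoc]
    _ = U * ((Sig * Sig⁻¹) * (Ud * Sᵀ)) := by
          rw [hPVd, Matrix.one_mul, Matrix.mul_assoc]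
    _ = U * (Ud * Sᵀ) := by rw [hSig1, Matrix.one_mul]
    _ = U * Ud * Sᵀ := by rw [Matrix.mul_assoc]
  · calc P * Wd * (Sᵀ * M)
        = P * (Vd * (Sig⁻¹ * ((Ud * (Sᵀ * U)) * (Sig * Vᵀ)))) := by
          rw [hWdB, hM]; simp only [Matrix.mul_assoc]
    _ = P * (Vd * ((Sig⁻¹ * Sig) * Vᵀ)) := by
          rw [hUdA, Matrix.one_mul, Matrix.mul_assoc]
    _ = P * (Vd * Vᵀ) := by rw [hSig2, Matrix.one_mul]
    _ = P * Vd * Vᵀ := by rw [Matrix.mul_assoc]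
end

section
/- Let M ∈ ℝ^{m×n} have rank r with admissible sampling (S,P) and W = SᵀMP. Then (I − WW†)SᵀM = 0 and MP(I − W†W) = 0; that is, the columns of SᵀM lie in the range of W and the rows of MP lie in the row space of W. -/
open Matrix

lemma isUnit_of_rank_eq_card_s10 {k : ℕ} (A : Matrix (Fin k) (Fin k) ℝ) (h : A.rank = k) :
    IsUnit A := by
  rw [← Matrix.mulVec_surjective_iff_isUnit]
  have hr : LinearMap.range A.mulVecLin = ⊤ := by
    apply Submodule.eq_top_of_finrank_eq
    simpa [Matrix.rank] using h
  intro v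
  exact hr ▸ Submodule.mem_top (x := v) |> (fun hv => LinearMap.mem_range.mp (hr ▸ Submodule.mem_top))

/-- With `W = Sᵀ M P` under admissible sampling, `(I − WW†) Sᵀ M = 0` and
`M P (I − W†W) = 0`. -/
theorem cur_range_rowspace_capture {m n r s c : ℕ}
    (U : Matrix (Fin m) (Fin r) ℝ) (V : Matrix (Fin n) (Fin r) ℝ)
    (Sig : Matrix (Fin r) (Fin r) ℝ) (M : Matrix (Fin m) (Fin n) ℝ)
    (S : Matrix (Fin m) (Fin s) ℝ) (P : Matrix (Fin n) (Fin c) ℝ)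
    (hU : Uᵀ * U = 1) (hV : Vᵀ * V = 1)
    (hSigDiag : Sig.IsDiag) (hSigInv : IsUnit Sig.det)
    (hM : M = U * Sig * Vᵀ)
    (hSU : (Sᵀ * U).rank = r) (hVP : (Vᵀ * P).rank = r)
    (Wd : Matrix (Fin c) (Fin s) ℝ) (hWd : IsMP (Sᵀ * M * P) Wd) :
    (1 - (Sᵀ * M * P) * Wd) * (Sᵀ * M) = 0 ∧
    (M * P) * (1 - Wd * (Sᵀ * M * P)) = 0 := by
  obtain ⟨h1, h2, h3, h4⟩ := hWd
  set A := Sᵀ * U with hA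
  set B := Vᵀ * P with hB
  have hAU : IsUnit (Aᵀ * A) :=
    isUnit_of_rank_eq_card_s10 _ (by rw [Matrix.rank_transpose_mul_self]; exact hSU)
  have hBU : IsUnit (B * Bᵀ) :=
    isUnit_of_rank_eq_card_s10 _ (by rw [Matrix.rank_self_mul_transpose]; exact hVP)
  have hAinv : (Aᵀ * A)⁻¹ * (Aᵀ * A) = 1 :=
    Matrix.nonsing_inv_mul _ ((Matrix.isUnit_iff_isUnit_det _).mp hAU)
  have hBinv : (B * Bᵀ) * (B * Bᵀ)⁻¹ = 1 :=
    Matrix.mul_nonsing_inv _ ((Matrix.isUnit_iff_isUnit_det _).mp hBU)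
  set W := Sᵀ * M * P with hW
  have hWeq : W = A * Sig * B := by
    rw [hW, hM, hA, hB]; simp only [Matrix.mul_assoc]
  have hSM : Sᵀ * M = W * (Bᵀ * (B * Bᵀ)⁻¹ * Vᵀ) := by
    rw [hWeq, hM,
      show A * Sig * B * (Bᵀ * (B * Bᵀ)⁻¹ * Vᵀ)
          = A * Sig * ((B * Bᵀ) * (B * Bᵀ)⁻¹ * Vᵀ) by simp only [Matrix.mul_assoc],
      hBinv, Matrix.one_mul, hA]
    simp only [Matrix.mul_assoc]
  have hMP : M * P = (U * (Aᵀ * A)⁻¹ * Aᵀ) * W := by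
    rw [hWeq, hM,
      show U * (Aᵀ * A)⁻¹ * Aᵀ * (A * Sig * B)
          = U * ((Aᵀ * A)⁻¹ * (Aᵀ * A) * (Sig * B)) by simp only [Matrix.mul_assoc],
      hAinv, Matrix.one_mul, hB]
    simp only [Matrix.mul_assoc]
  constructor
  · rw [hSM, Matrix.sub_mul, Matrix.one_mul,
      show W * Wd * (W * (Bᵀ * (B * Bᵀ)⁻¹ * Vᵀ))
          = W * Wd * W * (Bᵀ * (B * Bᵀ)⁻¹ * Vᵀ) by simp only [Matrix.mul_assoc],
      h1, sub_self]
  · rw [hMP, Matrix.mul_sub, Matrix.mul_one,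
      show U * (Aᵀ * A)⁻¹ * Aᵀ * W * (Wd * W)
          = U * (Aᵀ * A)⁻¹ * Aᵀ * (W * Wd * W) by simp only [Matrix.mul_assoc],
      h1, sub_self]
end

section
/- Let M ∈ ℝ^{m×n} have rank r, (S,P) admissible, and E ∈ ℝ^{m×n} satisfy SᵀE = 0 and EP = 0. Then for every ε ∈ ℝ, the CUR map applied to M + εE recovers M exactly: (M + εE)P (Sᵀ(M + εE)P)† Sᵀ(M + εE) = M. -/
open Matrix

lemma isUnit_det_of_rank_eq_card {r : ℕ} (A : Matrix (Fin r) (Fin r) ℝ) (h : A.rank = r) :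
    IsUnit A.det := by
  rw [isUnit_iff_ne_zero]
  intro hdet
  obtain ⟨v, hv, hv0⟩ := (Matrix.exists_mulVec_eq_zero_iff).2 hdet
  have hker : Module.finrank ℝ (LinearMap.ker A.mulVecLin) = 0 := by
    have h2 := LinearMap.finrank_range_add_finrank_ker A.mulVecLin
    rw [Module.finrank_fintype_fun_eq_card, Fintype.card_fin] at h2
    unfold Matrix.rank at h
    omega
  have : (LinearMap.ker A.mulVecLin) = ⊥ := Submodule.finrank_eq_zero.mp hker
  have hvmem : v ∈ LinearMap.ker A.mulVecLin := by
    simp [LinearMap.mem_ker, Matrix.mulVecLin_apply, hv0]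
  rw [this, Submodule.mem_bot] at hvmem
  exact hv hvmem

lemma left_cancel_of_full_col_rank {s r k : ℕ} (A : Matrix (Fin s) (Fin r) ℝ)
    (hA : IsUnit (Aᵀ * A).det) (X Y : Matrix (Fin r) (Fin k) ℝ)
    (h : A * X = A * Y) : X = Y := by
  have h2 : Aᵀ * A * X = Aᵀ * A * Y := by
    rw [Matrix.mul_assoc, Matrix.mul_assoc, h]
  calc X = (Aᵀ * A)⁻¹ * (Aᵀ * A * X) := by
          rw [← Matrix.mul_assoc, Matrix.nonsing_inv_mul _ hA, Matrix.one_mul]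
    _ = (Aᵀ * A)⁻¹ * (Aᵀ * A * Y) := by rw [h2]
    _ = Y := by rw [← Matrix.mul_assoc, Matrix.nonsing_inv_mul _ hA, Matrix.one_mul]

lemma right_cancel_of_full_row_rank {r c k : ℕ} (B : Matrix (Fin r) (Fin c) ℝ)
    (hB : IsUnit (B * Bᵀ).det) (X Y : Matrix (Fin k) (Fin r) ℝ)
    (h : X * B = Y * B) : X = Y := by
  have h2 : X * (B * Bᵀ) = Y * (B * Bᵀ) := by
    rw [← Matrix.mul_assoc, ← Matrix.mul_assoc, h]
  calc X = X * (B * Bᵀ) * (B * Bᵀ)⁻¹ := by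
          rw [Matrix.mul_assoc, Matrix.mul_nonsing_inv _ hB, Matrix.mul_one]
    _ = Y * (B * Bᵀ) * (B * Bᵀ)⁻¹ := by rw [h2]
    _ = Y := by rw [Matrix.mul_assoc, Matrix.mul_nonsing_inv _ hB, Matrix.mul_one]

lemma key_bwa {r s c : ℕ} (A : Matrix (Fin s) (Fin r) ℝ) (B : Matrix (Fin r) (Fin c) ℝ)
    (Sig : Matrix (Fin r) (Fin r) ℝ) (Wd : Matrix (Fin c) (Fin s) ℝ)
    (hA : IsUnit (Aᵀ * A).det) (hB : IsUnit (B * Bᵀ).det) (hSig : IsUnit Sig.det)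
    (h1 : (A * Sig * B) * Wd * (A * Sig * B) = A * Sig * B) :
    B * Wd * A = Sig⁻¹ := by
  have e1 : Sig * (B * (Wd * (A * (Sig * B)))) = Sig * B :=
    left_cancel_of_full_col_rank A hA _ _ (by simpa only [Matrix.mul_assoc] using h1)
  have e2 : Sig * B * Wd * A * Sig = Sig := by
    refine right_cancel_of_full_row_rank B hB _ _ ?_
    simpa only [Matrix.mul_assoc] using e1
  have e3 : Sig * (B * Wd * A) * Sig = Sig := by
    simpa only [Matrix.mul_assoc] using e2
  calc B * Wd * A
      = Sig⁻¹ * (Sig * (B * Wd * A) * Sig) * Sig⁻¹ := by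
        rw [Matrix.mul_assoc Sig, Matrix.nonsing_inv_mul_cancel_left _ _ hSig,
          Matrix.mul_nonsing_inv_cancel_right _ _ hSig]
    _ = Sig⁻¹ * Sig * Sig⁻¹ := by rw [e3]
    _ = Sig⁻¹ := by rw [Matrix.nonsing_inv_mul _ hSig, Matrix.one_mul]

/-- If the perturbation is invisible to the sampled rows and columns
(`Sᵀ E = 0`, `E P = 0`), the CUR map applied to `M + εE` recovers `M` exactly
for every `ε`. -/
theorem cur_exact_on_sampling_invisible_perturbation {m n r s c : ℕ}
    (U : Matrix (Fin m) (Fin r) ℝ) (V : Matrix (Fin n) (Fin r) ℝ)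
    (Sig : Matrix (Fin r) (Fin r) ℝ) (M E : Matrix (Fin m) (Fin n) ℝ)
    (S : Matrix (Fin m) (Fin s) ℝ) (P : Matrix (Fin n) (Fin c) ℝ)
    (hU : Uᵀ * U = 1) (hV : Vᵀ * V = 1)
    (hSigDiag : Sig.IsDiag) (hSigInv : IsUnit Sig.det)
    (hM : M = U * Sig * Vᵀ)
    (hSU : (Sᵀ * U).rank = r) (hVP : (Vᵀ * P).rank = r)
    (hSE : Sᵀ * E = 0) (hEP : E * P = 0) :
    ∀ (ε : ℝ) (Wd : Matrix (Fin c) (Fin s) ℝ),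
      IsMP (Sᵀ * (M + ε • E) * P) Wd →
      (M + ε • E) * P * Wd * (Sᵀ * (M + ε • E)) = M := by
  intro ε Wd hMPinv
  have h1 := hMPinv.1
  set A := Sᵀ * U with hAdef
  set B := Vᵀ * P with hBdef
  have hAunit : IsUnit (Aᵀ * A).det := by
    apply isUnit_det_of_rank_eq_card
    rw [Matrix.rank_transpose_mul_self, hSU]
  have hBunit : IsUnit (B * Bᵀ).det := by
    apply isUnit_det_of_rank_eq_card
    rw [Matrix.rank_self_mul_transpose, hVP]
  have hSM : Sᵀ * (M + ε • E) = A * Sig * Vᵀ := by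
    rw [Matrix.mul_add, Matrix.mul_smul, hSE, smul_zero, add_zero, hM,
      ← Matrix.mul_assoc, ← Matrix.mul_assoc]
  have hMP : (M + ε • E) * P = U * Sig * B := by
    rw [Matrix.add_mul, Matrix.smul_mul, hEP, smul_zero, add_zero, hM,
      Matrix.mul_assoc]
  have hC : Sᵀ * (M + ε • E) * P = A * Sig * B := by
    rw [hSM, Matrix.mul_assoc]
  rw [hC] at h1
  have hKey : B * Wd * A = Sig⁻¹ := key_bwa A B Sig Wd hAunit hBunit hSigInv h1
  rw [hMP, hSM, hM]
  have expand : U * Sig * B * Wd * (A * Sig * Vᵀ) =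
      (U * Sig) * ((B * Wd * A) * (Sig * Vᵀ)) := by
    simp only [Matrix.mul_assoc]
  rw [expand, hKey, Matrix.nonsing_inv_mul_cancel_left _ _ hSigInv, Matrix.mul_assoc]
end

section
/- Let Ŵ ∈ ℝ^{m×n} have rank r, and suppose the block decomposition of F = Ŵ − W in orthonormal bases adapted to a compact SVD W = QΛZᵀ is [[F₁₁, F₁₂],[F₂₁, F₂₂]] with Λ + F₁₁ invertible. Then F₂₂ = F₂₁(Λ + F₁₁)⁻¹F₁₂; i.e., the Schur complement of the (1,1) block of Ŵ in these bases vanishes. -/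
open Matrix

/-- If `M` and `M * N` have the same rank, the columns of `M` lie in the
column space of `M * N`, i.e. `M = M * N * Y` for some `Y`. -/
lemma exists_factor_of_rank_eq {m n r : ℕ}
    (M : Matrix (Fin m) (Fin n) ℝ) (N : Matrix (Fin n) (Fin r) ℝ)
    (h : M.rank ≤ (M * N).rank) :
    ∃ Y : Matrix (Fin r) (Fin n) ℝ, M = M * N * Y := by
  have hle : LinearMap.range (M * N).mulVecLin ≤ LinearMap.range M.mulVecLin := by
    rw [Matrix.mulVecLin_mul]
    exact LinearMap.range_comp_le_range _ _
  have heq : LinearMap.range (M * N).mulVecLin = LinearMap.range M.mulVecLin :=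
    Submodule.eq_of_le_of_finrank_le hle h
  have hcol : ∀ j : Fin n, ∃ v : Fin r → ℝ,
      (M * N) *ᵥ v = M *ᵥ Pi.single j 1 := by
    intro j
    have : M *ᵥ Pi.single j 1 ∈ LinearMap.range (M * N).mulVecLin := by
      rw [heq]; exact ⟨Pi.single j 1, rfl⟩
    exact this
  choose v hv using hcol
  refine ⟨Matrix.of fun i j => v j i, ?_⟩
  ext k j
  have h2 : ((M * N) *ᵥ v j) k = M k j := by
    rw [hv j, Matrix.mulVec_single]; simp
  rw [← h2]
  simp [Matrix.mul_apply, Matrix.mulVec, dotProduct]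

/-- Vanishing Schur complement: if `Ŵ` has rank `r` and, in orthonormal bases
`[Q, Q⊥]`, `[Z, Z⊥]` adapted to a compact SVD `W = Q Λ Zᵀ`, the blocks of
`F = Ŵ − W` are `F₁₁, F₁₂, F₂₁, F₂₂` with `Λ + F₁₁` invertible, then
`F₂₂ = F₂₁ (Λ + F₁₁)⁻¹ F₁₂`. -/
theorem schur_complement_vanishes {m n r p q : ℕ}
    (Q : Matrix (Fin m) (Fin r) ℝ) (Qp : Matrix (Fin m) (Fin p) ℝ)
    (Z : Matrix (Fin n) (Fin r) ℝ) (Zp : Matrix (Fin n) (Fin q) ℝ)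
    (Lam : Matrix (Fin r) (Fin r) ℝ)
    (W What : Matrix (Fin m) (Fin n) ℝ)
    (hQ : Qᵀ * Q = 1) (hQp : Qpᵀ * Qp = 1) (hQQp : Qᵀ * Qp = 0)
    (hQfull : Q * Qᵀ + Qp * Qpᵀ = 1)
    (hZ : Zᵀ * Z = 1) (hZp : Zpᵀ * Zp = 1) (hZZp : Zᵀ * Zp = 0)
    (hZfull : Z * Zᵀ + Zp * Zpᵀ = 1)
    (hLam : IsUnit Lam.det)
    (hW : W = Q * Lam * Zᵀ)
    (hrank : What.rank = r)
    (hblock : IsUnit (Lam + Qᵀ * (What - W) * Z).det) :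
    Qpᵀ * (What - W) * Zp =
      (Qpᵀ * (What - W) * Z) * (Lam + Qᵀ * (What - W) * Z)⁻¹ *
        (Qᵀ * (What - W) * Zp) := by
  set A : Matrix (Fin r) (Fin r) ℝ := Lam + Qᵀ * (What - W) * Z with hA
  -- `Qpᵀ * Q = 0`
  have hQpQ : Qpᵀ * Q = 0 := by
    have := congrArg Matrix.transpose hQQp
    simpa [Matrix.transpose_mul] using this
  -- `Qᵀ * W * Z = Lam`, `Qpᵀ * W = 0`, `W * Zp = ... ` computations
  have hQWZ : Qᵀ * W * Z = Lam := by
    rw [hW]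
    simp only [Matrix.mul_assoc]
    rw [hZ, Matrix.mul_one, ← Matrix.mul_assoc, hQ, Matrix.one_mul]
  have hQpW : Qpᵀ * W = 0 := by
    rw [hW, ← Matrix.mul_assoc, ← Matrix.mul_assoc, hQpQ, Matrix.zero_mul,
      Matrix.zero_mul]
  have hWZp : W * Zp = 0 := by
    rw [hW, Matrix.mul_assoc, hZZp, Matrix.mul_zero]
  -- A is Qᵀ * What * Z
  have hAeq : A = Qᵀ * What * Z := by
    rw [hA, Matrix.mul_sub, Matrix.sub_mul, ← hQWZ]
    abel
  -- rank facts
  have hAunit : IsUnit A := (Matrix.isUnit_iff_isUnit_det A).mpr hblock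
  have hArank : A.rank = r := by
    simpa using Matrix.rank_of_isUnit A hAunit
  have hWhatZ : What.rank ≤ (What * Z).rank := by
    calc What.rank = A.rank := by rw [hArank, hrank]
    _ = (Qᵀ * (What * Z)).rank := by rw [hAeq, Matrix.mul_assoc]
    _ ≤ (What * Z).rank := Matrix.rank_mul_le_right _ _
  obtain ⟨Y, hY⟩ := exists_factor_of_rank_eq What Z hWhatZ
  -- solve for Y
  have hYval : Y = A⁻¹ * (Qᵀ * What) := by
    have h1 : Qᵀ * What = A * Y := by
      conv_lhs => rw [hY]
      rw [hAeq]
      simp only [Matrix.mul_assoc]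
    rw [h1, ← Matrix.mul_assoc, Matrix.nonsing_inv_mul A hblock, Matrix.one_mul]
  -- blocks of F in terms of What
  have hF21 : Qpᵀ * (What - W) * Z = Qpᵀ * What * Z := by
    simp [Matrix.mul_sub, Matrix.sub_mul, hQpW]
  have hF12 : Qᵀ * (What - W) * Zp = Qᵀ * What * Zp := by
    simp [Matrix.mul_sub, Matrix.sub_mul, Matrix.mul_assoc, hWZp]
  have hF22 : Qpᵀ * (What - W) * Zp = Qpᵀ * What * Zp := by
    simp [Matrix.mul_sub, Matrix.sub_mul, hQpW]
  rw [hF21, hF12, hF22]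
  conv_lhs => rw [hY, hYval]
  simp only [Matrix.mul_assoc]
end

section
/- Let W ∈ ℝ^{s×c} have rank r with σ_r(W) = γ > 0, let 0 < c < 1/2, and ‖E‖₂ ≤ cγ. Let Ŵ = (W+E)_r, F = Ŵ − W, and Q, Z the left/right singular factors of W. Then the normal component satisfies ‖(I − QQᵀ)F(I − ZZᵀ)‖₂ ≤ (4/(1−2c))·‖E‖₂²/γ. -/
/-!
Write `F = Ŵ - W` and `A = Qᵀ Ŵ Z = Λ + Qᵀ F Z`. Comparing `Ŵ` with the rank-`r` competitor `W`
gives `‖F‖ ≤ 2‖E‖`, and testing `σ_r(W)` against `Q Λ (1 - x xᵀ) Zᵀ` gives `‖Λ x‖ ≥ γ ‖x‖`.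
Hence `‖A x‖ ≥ (1 - 2c) γ ‖x‖`, so `A` is invertible with `‖A⁻¹‖ ≤ ((1 - 2c) γ)⁻¹`.
As `rank Ŵ ≤ r = rank A`, the Schur complement of `A` in `Ŵ` vanishes: `Ŵ = Ŵ Z A⁻¹ Qᵀ Ŵ`.
The projections `1 - QQᵀ` and `1 - ZZᵀ` annihilate `W`, so the normal component equals
`((1 - QQᵀ) F Z) A⁻¹ (Qᵀ F (1 - ZZᵀ))`, of norm at most `2‖E‖ · ‖A⁻¹‖ · 2‖E‖`.
-/

open Matrix
open scoped Matrix.Norms.L2Operator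

/-- The spectral (ℓ²-operator) norm of a real matrix. -/
noncomputable def spNorm {m n : ℕ} (A : Matrix (Fin m) (Fin n) ℝ) : ℝ := ‖A‖

/-- The `k`-th singular value of `A` (1-indexed), characterized as the
distance in spectral norm from `A` to the matrices of rank `< k`. -/
noncomputable def sval {m n : ℕ} (k : ℕ) (A : Matrix (Fin m) (Fin n) ℝ) : ℝ :=
  sInf {x | ∃ B : Matrix (Fin m) (Fin n) ℝ, B.rank < k ∧ x = spNorm (A - B)}

/-- `Ahat` is a best rank-`r` approximation of `A` in spectral norm. -/
def IsBestRankApprox {m n : ℕ} (r : ℕ) (A Ahat : Matrix (Fin m) (Fin n) ℝ) : Prop :=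
  Ahat.rank ≤ r ∧ ∀ B : Matrix (Fin m) (Fin n) ℝ, B.rank ≤ r →
    spNorm (A - Ahat) ≤ spNorm (A - B)

open WithLp

namespace Matrix

variable {l m n p : ℕ}

theorem norm_toLp_mulVec_le (A : Matrix (Fin m) (Fin n) ℝ) (v : Fin n → ℝ) :
    ‖toLp 2 (A *ᵥ v)‖ ≤ ‖A‖ * ‖toLp 2 v‖ :=
  A.l2_opNorm_mulVec (toLp 2 v)

theorem l2_opNorm_le_of_norm_mulVec_le {A : Matrix (Fin m) (Fin n) ℝ} {C : ℝ} (hC : 0 ≤ C)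
    (h : ∀ v, ‖toLp 2 (A *ᵥ v)‖ ≤ C * ‖toLp 2 v‖) : ‖A‖ ≤ C :=
  ContinuousLinearMap.opNorm_le_bound _ hC fun x => h x

theorem l2_opNorm_transpose (A : Matrix (Fin m) (Fin n) ℝ) : ‖Aᵀ‖ = ‖A‖ := by
  rw [← conjTranspose_eq_transpose_of_trivial, l2_opNorm_conjTranspose]

theorem l2_opNorm_le_one_of_transpose_mul_self_eq_self {P : Matrix (Fin m) (Fin m) ℝ}
    (hP : Pᵀ * P = P) : ‖P‖ ≤ 1 := by
  have h := l2_opNorm_conjTranspose_mul_self P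
  rw [conjTranspose_eq_transpose_of_trivial, hP] at h
  nlinarith [norm_nonneg P]

theorem l2_opNorm_le_one_of_transpose_mul_self_eq_one {Q : Matrix (Fin m) (Fin n) ℝ}
    (hQ : Qᵀ * Q = 1) : ‖Q‖ ≤ 1 := by
  have h := l2_opNorm_conjTranspose_mul_self Q
  rw [conjTranspose_eq_transpose_of_trivial, hQ] at h
  have h1 : ‖(1 : Matrix (Fin n) (Fin n) ℝ)‖ ≤ 1 :=
    l2_opNorm_le_one_of_transpose_mul_self_eq_self (by simp)
  nlinarith [norm_nonneg Q]

theorem l2_opNorm_one_sub_mul_transpose_le_one {Q : Matrix (Fin m) (Fin n) ℝ}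
    (hQ : Qᵀ * Q = 1) : ‖1 - Q * Qᵀ‖ ≤ 1 := by
  refine l2_opNorm_le_one_of_transpose_mul_self_eq_self ?_
  simp only [transpose_sub, transpose_one, transpose_mul, transpose_transpose, sub_mul, mul_sub,
    one_mul, mul_one, Matrix.mul_assoc]
  rw [← Matrix.mul_assoc Qᵀ, hQ, Matrix.one_mul, sub_self, sub_zero]

theorem l2_opNorm_mul_mul_le_mul (X : Matrix (Fin l) (Fin m) ℝ) (M : Matrix (Fin m) (Fin n) ℝ)
    (Y : Matrix (Fin n) (Fin p) ℝ) : ‖X * M * Y‖ ≤ ‖X‖ * ‖M‖ * ‖Y‖ :=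
  (l2_opNorm_mul _ _).trans (by gcongr; exact l2_opNorm_mul _ _)

theorem l2_opNorm_mul_mul_le {X : Matrix (Fin l) (Fin m) ℝ} {Y : Matrix (Fin n) (Fin p) ℝ}
    (hX : ‖X‖ ≤ 1) (hY : ‖Y‖ ≤ 1) (M : Matrix (Fin m) (Fin n) ℝ) : ‖X * M * Y‖ ≤ ‖M‖ :=
  calc ‖X * M * Y‖ ≤ ‖X‖ * ‖M‖ * ‖Y‖ := l2_opNorm_mul_mul_le_mul X M Y
    _ ≤ 1 * ‖M‖ * 1 := by gcongr
    _ = ‖M‖ := by ring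

theorem l2_opNorm_vecMulVec_le (u : Fin m → ℝ) (v : Fin n → ℝ) :
    ‖vecMulVec u v‖ ≤ ‖toLp 2 u‖ * ‖toLp 2 v‖ := by
  refine l2_opNorm_le_of_norm_mulVec_le (by positivity) fun w => ?_
  have hcs : |v ⬝ᵥ w| ≤ ‖toLp 2 v‖ * ‖toLp 2 w‖ := by
    simpa [EuclideanSpace.inner_eq_star_dotProduct, dotProduct_comm] using
      abs_real_inner_le_norm (toLp 2 v) (toLp 2 w)
  rw [vecMulVec_mulVec, op_smul_eq_smul, toLp_smul, norm_smul, Real.norm_eq_abs]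
  calc |v ⬝ᵥ w| * ‖toLp 2 u‖ ≤ ‖toLp 2 v‖ * ‖toLp 2 w‖ * ‖toLp 2 u‖ := by gcongr
    _ = _ := by ring

theorem isUnit_det_of_forall_le_norm_mulVec {A : Matrix (Fin n) (Fin n) ℝ} {c : ℝ} (hc : 0 < c)
    (h : ∀ v, c * ‖toLp 2 v‖ ≤ ‖toLp 2 (A *ᵥ v)‖) : IsUnit A.det := by
  rw [← isUnit_iff_isUnit_det, ← mulVec_injective_iff_isUnit]
  refine (injective_iff_map_eq_zero A.mulVecLin).mpr fun v hv => ?_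
  have := h v
  rw [show A *ᵥ v = 0 from hv, toLp_zero, norm_zero] at this
  simpa using (mul_nonpos_iff_pos_imp_nonpos.mp this).1 hc

theorem l2_opNorm_inv_le_of_forall_le_norm_mulVec {A : Matrix (Fin n) (Fin n) ℝ} {c : ℝ}
    (hc : 0 < c) (h : ∀ v, c * ‖toLp 2 v‖ ≤ ‖toLp 2 (A *ᵥ v)‖) : ‖A⁻¹‖ ≤ c⁻¹ := by
  refine l2_opNorm_le_of_norm_mulVec_le (by positivity) fun v => ?_
  have hv := h (A⁻¹ *ᵥ v)
  rw [mulVec_mulVec, mul_nonsing_inv A (isUnit_det_of_forall_le_norm_mulVec hc h),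
    one_mulVec] at hv
  rw [inv_mul_eq_div, le_div_iff₀ hc]
  linarith

theorem le_norm_add_mulVec_of_forall_le {A G : Matrix (Fin m) (Fin n) ℝ} {a b : ℝ}
    (hA : ∀ v, a * ‖toLp 2 v‖ ≤ ‖toLp 2 (A *ᵥ v)‖) (hG : ‖G‖ ≤ b) (v : Fin n → ℝ) :
    (a - b) * ‖toLp 2 v‖ ≤ ‖toLp 2 ((A + G) *ᵥ v)‖ := by
  have htri : ‖toLp 2 (A *ᵥ v)‖ ≤ ‖toLp 2 ((A + G) *ᵥ v)‖ + ‖toLp 2 (G *ᵥ v)‖ := by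
    calc ‖toLp 2 (A *ᵥ v)‖ = ‖toLp 2 ((A + G) *ᵥ v) - toLp 2 (G *ᵥ v)‖ := by
          rw [← toLp_sub, add_mulVec, add_sub_cancel_right]
      _ ≤ _ := norm_sub_le _ _
  nlinarith [hA v, norm_toLp_mulVec_le G v, norm_nonneg (toLp 2 v)]

theorem rank_lt_of_mulVec_eq_zero {K : Type*} [Field K] {A : Matrix (Fin m) (Fin n) K}
    {v : Fin n → K} (hv : v ≠ 0) (hAv : A *ᵥ v = 0) : A.rank < n := by
  have hker : 0 < Module.finrank K (LinearMap.ker A.mulVecLin) :=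
    Module.finrank_pos_iff_exists_ne_zero.mpr ⟨⟨v, hAv⟩, fun h => hv (congrArg Subtype.val h)⟩
  have := A.mulVecLin.finrank_range_add_finrank_ker
  rw [Module.finrank_fin_fun] at this
  unfold rank
  omega

theorem eq_mul_mul_inv_mul_of_rank_le {K : Type*} [Field K] {r : ℕ}
    {M : Matrix (Fin m) (Fin n) K} (X : Matrix (Fin r) (Fin m) K) (Z : Matrix (Fin n) (Fin r) K)
    (hM : M.rank ≤ r) (hA : IsUnit (X * M * Z).det) :
    M = M * Z * (X * M * Z)⁻¹ * (X * M) := by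
  set A := X * M * Z
  have hrankA : A.rank = r := by simpa using rank_of_isUnit A ((isUnit_iff_isUnit_det A).mpr hA)
  have hrankMZ : M.rank ≤ (M * Z).rank := by
    calc M.rank ≤ A.rank := hM.trans hrankA.ge
      _ ≤ (M * Z).rank := by simpa only [A, Matrix.mul_assoc] using rank_mul_le_right X (M * Z)
  have hrange : LinearMap.range (M * Z).mulVecLin = LinearMap.range M.mulVecLin := by
    refine Submodule.eq_of_le_of_finrank_le ?_ hrankMZ
    rw [mulVecLin_mul]
    exact LinearMap.range_comp_le_range _ _
  refine ext_iff_mulVec.mpr fun y => ?_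
  obtain ⟨b, hb⟩ : M *ᵥ y ∈ LinearMap.range (M * Z).mulVecLin := hrange ▸ ⟨y, rfl⟩
  rw [mulVecLin_apply] at hb
  have hXM : (X * M) *ᵥ y = A *ᵥ b := by
    rw [← mulVec_mulVec, ← hb, mulVec_mulVec, ← Matrix.mul_assoc]
  rw [← mulVec_mulVec, hXM, mulVec_mulVec, Matrix.mul_assoc _ A⁻¹, nonsing_inv_mul A hA,
    Matrix.mul_one, hb]

theorem one_sub_mul_transpose_mul_self_eq_zero {Q : Matrix (Fin m) (Fin n) ℝ}
    (hQ : Qᵀ * Q = 1) : (1 - Q * Qᵀ) * Q = 0 := by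
  rw [Matrix.sub_mul, Matrix.one_mul, Matrix.mul_assoc, hQ, Matrix.mul_one, sub_self]

theorem transpose_mul_one_sub_mul_transpose_eq_zero {Z : Matrix (Fin m) (Fin n) ℝ}
    (hZ : Zᵀ * Z = 1) : Zᵀ * (1 - Z * Zᵀ) = 0 := by
  rw [Matrix.mul_sub, Matrix.mul_one, ← Matrix.mul_assoc, hZ, Matrix.one_mul, sub_self]

theorem transpose_mul_mul_mul_transpose_mul {r : ℕ} {Q : Matrix (Fin m) (Fin r) ℝ}
    {Z : Matrix (Fin n) (Fin r) ℝ} (hQ : Qᵀ * Q = 1) (hZ : Zᵀ * Z = 1)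
    (L : Matrix (Fin r) (Fin r) ℝ) : Qᵀ * (Q * L * Zᵀ) * Z = L := by
  simp only [← Matrix.mul_assoc, hQ, Matrix.one_mul]
  rw [Matrix.mul_assoc, hZ, Matrix.mul_one]

theorem mul_sub_mul_eq_of_mul_eq_zero {r : ℕ} {P : Matrix (Fin l) (Fin m) ℝ}
    {P' : Matrix (Fin n) (Fin p) ℝ} {M W : Matrix (Fin m) (Fin n) ℝ} (X : Matrix (Fin r) (Fin m) ℝ)
    (Z : Matrix (Fin n) (Fin r) ℝ) (S : Matrix (Fin r) (Fin r) ℝ) (hPW : P * W = 0)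
    (hWP' : W * P' = 0) (hM : M = M * Z * S * (X * M)) :
    P * (M - W) * P' = P * (M - W) * Z * S * (X * (M - W) * P') := by
  rw [Matrix.mul_sub, hPW, sub_zero, Matrix.mul_assoc X, Matrix.sub_mul M W, hWP', sub_zero]
  conv_lhs => rw [hM]
  simp only [Matrix.mul_assoc]

end Matrix

section SingularValue

variable {s c m n : ℕ}

theorem sval_le_spNorm_sub {k : ℕ} (A : Matrix (Fin m) (Fin n) ℝ) {B : Matrix (Fin m) (Fin n) ℝ}
    (hB : B.rank < k) : sval k A ≤ spNorm (A - B) :=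
  csInf_le ⟨0, by rintro _ ⟨C, -, rfl⟩; exact norm_nonneg _⟩ ⟨B, hB, rfl⟩

theorem sval_mul_mul_le {k : ℕ} {X : Matrix (Fin s) (Fin m) ℝ} {Y : Matrix (Fin n) (Fin c) ℝ}
    (hX : ‖X‖ ≤ 1) (hY : ‖Y‖ ≤ 1) (M : Matrix (Fin m) (Fin n) ℝ) {B : Matrix (Fin m) (Fin n) ℝ}
    (hB : B.rank < k) : sval k (X * M * Y) ≤ ‖M - B‖ := by
  have hXBY : (X * B * Y).rank < k :=
    (rank_mul_le_left _ _).trans_lt ((rank_mul_le_right _ _).trans_lt hB)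
  refine (sval_le_spNorm_sub _ hXBY).trans ?_
  rw [spNorm, ← Matrix.sub_mul, ← Matrix.mul_sub]
  exact l2_opNorm_mul_mul_le hX hY _

theorem sval_mul_mul_mul_norm_le {X : Matrix (Fin s) (Fin m) ℝ} {Y : Matrix (Fin n) (Fin c) ℝ}
    (hX : ‖X‖ ≤ 1) (hY : ‖Y‖ ≤ 1) (M : Matrix (Fin m) (Fin n) ℝ) (v : Fin n → ℝ) :
    sval n (X * M * Y) * ‖toLp 2 v‖ ≤ ‖toLp 2 (M *ᵥ v)‖ := by
  rcases eq_or_ne v 0 with rfl | hv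
  · simp
  have hvv : v ⬝ᵥ v = ‖toLp 2 v‖ ^ 2 := by
    rw [← real_inner_self_eq_norm_sq, EuclideanSpace.inner_eq_star_dotProduct]
    simp
  set t := ‖toLp 2 v‖ ^ 2
  have ht : 0 < t := by
    have : toLp 2 v ≠ 0 := fun h => hv (congrArg ofLp h)
    positivity
  -- `B` is `M` composed with the orthogonal projection onto `v⊥`.
  set B := M - t⁻¹ • vecMulVec (M *ᵥ v) v
  have hBv : B *ᵥ v = 0 := by
    simp [B, sub_mulVec, smul_mulVec, vecMulVec_mulVec, hvv, ht.ne']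
  have hMB : ‖M - B‖ ≤ t⁻¹ * (‖toLp 2 (M *ᵥ v)‖ * ‖toLp 2 v‖) := by
    rw [sub_sub_cancel, norm_smul, Real.norm_of_nonneg (inv_nonneg.mpr ht.le)]
    gcongr
    exact l2_opNorm_vecMulVec_le _ _
  calc sval n (X * M * Y) * ‖toLp 2 v‖
      ≤ t⁻¹ * (‖toLp 2 (M *ᵥ v)‖ * ‖toLp 2 v‖) * ‖toLp 2 v‖ := by
        gcongr
        exact (sval_mul_mul_le hX hY M (rank_lt_of_mulVec_eq_zero hv hBv)).trans hMB
    _ = ‖toLp 2 (M *ᵥ v)‖ := by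
        field_simp
        ring

theorem IsBestRankApprox.norm_sub_le {r : ℕ} {A Ahat : Matrix (Fin m) (Fin n) ℝ}
    (h : IsBestRankApprox r A Ahat) {B : Matrix (Fin m) (Fin n) ℝ} (hB : B.rank ≤ r) :
    ‖Ahat - B‖ ≤ 2 * ‖A - B‖ :=
  calc ‖Ahat - B‖ ≤ ‖Ahat - A‖ + ‖A - B‖ := norm_sub_le_norm_sub_add_norm_sub ..
    _ ≤ 2 * ‖A - B‖ := by rw [norm_sub_rev]; linarith [show ‖A - Ahat‖ ≤ ‖A - B‖ from h.2 B hB]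

end SingularValue

theorem truncation_normal_component_bound_general {s c r : ℕ}
    (Q : Matrix (Fin s) (Fin r) ℝ) (Z : Matrix (Fin c) (Fin r) ℝ)
    (Lam : Matrix (Fin r) (Fin r) ℝ)
    (W E What : Matrix (Fin s) (Fin c) ℝ)
    (hQ : Qᵀ * Q = 1) (hZ : Zᵀ * Z = 1)
    (hW : W = Q * Lam * Zᵀ) (hrankW : W.rank = r)
    (γ : ℝ) (hγ : sval r W = γ) (hγpos : 0 < γ)
    (cc : ℝ) (hc1 : cc < 1 / 2)
    (hE : spNorm E ≤ cc * γ)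
    (hWhat : IsBestRankApprox r (W + E) What) :
    spNorm ((1 - Q * Qᵀ) * (What - W) * (1 - Z * Zᵀ))
      ≤ (4 / (1 - 2 * cc)) * spNorm E ^ 2 / γ := by
  unfold spNorm at hE ⊢
  have hQ1 := l2_opNorm_le_one_of_transpose_mul_self_eq_one hQ
  have hZ1 := l2_opNorm_le_one_of_transpose_mul_self_eq_one hZ
  have hQt1 : ‖Qᵀ‖ ≤ 1 := (l2_opNorm_transpose Q).trans_le hQ1
  have hF : ‖What - W‖ ≤ 2 * ‖E‖ := by simpa using hWhat.norm_sub_le hrankW.le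
  have hLam : ∀ v, γ * ‖toLp 2 v‖ ≤ ‖toLp 2 (Lam *ᵥ v)‖ := fun v => by
    rw [← hγ, hW]
    exact sval_mul_mul_mul_norm_le hQ1 ((l2_opNorm_transpose Z).trans_le hZ1) Lam v
  set A := Qᵀ * What * Z
  have hA : Lam + Qᵀ * (What - W) * Z = A := by
    rw [Matrix.mul_sub, Matrix.sub_mul, hW, transpose_mul_mul_mul_transpose_mul hQ hZ,
      add_sub_cancel]
  have hpos : 0 < (1 - 2 * cc) * γ := mul_pos (by linarith) hγpos
  have hAlow : ∀ v, ((1 - 2 * cc) * γ) * ‖toLp 2 v‖ ≤ ‖toLp 2 (A *ᵥ v)‖ := fun v =>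
    (mul_le_mul_of_nonneg_right (by linarith) (norm_nonneg _)).trans
      (hA ▸ le_norm_add_mulVec_of_forall_le hLam ((l2_opNorm_mul_mul_le hQt1 hZ1 _).trans hF) v)
  have hPW : (1 - Q * Qᵀ) * W = 0 := by
    simp only [hW, ← Matrix.mul_assoc, one_sub_mul_transpose_mul_self_eq_zero hQ, Matrix.zero_mul]
  have hWP : W * (1 - Z * Zᵀ) = 0 := by
    simp only [hW, Matrix.mul_assoc, transpose_mul_one_sub_mul_transpose_eq_zero hZ,
      Matrix.mul_zero]
  have hSchur := eq_mul_mul_inv_mul_of_rank_le Qᵀ Z hWhat.1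
    (isUnit_det_of_forall_le_norm_mulVec hpos hAlow)
  rw [mul_sub_mul_eq_of_mul_eq_zero Qᵀ Z A⁻¹ hPW hWP hSchur]
  calc _ ≤ ‖(1 - Q * Qᵀ) * (What - W) * Z‖ * ‖A⁻¹‖ * ‖Qᵀ * (What - W) * (1 - Z * Zᵀ)‖ :=
        l2_opNorm_mul_mul_le_mul _ _ _
    _ ≤ (2 * ‖E‖) * ((1 - 2 * cc) * γ)⁻¹ * (2 * ‖E‖) := by
        gcongr
        · exact (l2_opNorm_mul_mul_le (l2_opNorm_one_sub_mul_transpose_le_one hQ) hZ1 _).trans hF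
        · exact l2_opNorm_inv_le_of_forall_le_norm_mulVec hpos hAlow
        · exact (l2_opNorm_mul_mul_le hQt1 (l2_opNorm_one_sub_mul_transpose_le_one hZ) _).trans hF
    _ = 4 / (1 - 2 * cc) * ‖E‖ ^ 2 / γ := by
        field_simp
        ring

/-- Second-order bound on the normal component of the rank-`r` truncation
error: `‖(I − QQᵀ) F (I − ZZᵀ)‖₂ ≤ (4/(1−2c)) ‖E‖₂² / γ` where
`F = (W+E)_r − W` and `γ = σ_r(W)`. -/
theorem truncation_normal_component_bound {s c r : ℕ}
    (Q : Matrix (Fin s) (Fin r) ℝ) (Z : Matrix (Fin c) (Fin r) ℝ)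
    (Lam : Matrix (Fin r) (Fin r) ℝ)
    (W E What : Matrix (Fin s) (Fin c) ℝ)
    (hQ : Qᵀ * Q = 1) (hZ : Zᵀ * Z = 1)
    (hLamDiag : Lam.IsDiag) (hLam : IsUnit Lam.det)
    (hW : W = Q * Lam * Zᵀ) (hrankW : W.rank = r)
    (γ : ℝ) (hγ : sval r W = γ) (hγpos : 0 < γ)
    (cc : ℝ) (hc0 : 0 < cc) (hc1 : cc < 1 / 2)
    (hE : spNorm E ≤ cc * γ)
    (hWhat : IsBestRankApprox r (W + E) What) :
    spNorm ((1 - Q * Qᵀ) * (What - W) * (1 - Z * Zᵀ))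
      ≤ (4 / (1 - 2 * cc)) * spNorm E ^ 2 / γ :=
  truncation_normal_component_bound_general Q Z Lam W E What hQ hZ hW hrankW γ hγ hγpos cc hc1 hE
    hWhat
end
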